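/- Let h₁, h₂, h₃ be the automorphisms of the finite abelian group A = ℤ³/(2ℤ × 2ℤ × 12ℤ) ≅ ℤ/2 × ℤ/2 × ℤ/12 induced (via conjugation by D = diag(2,2,12)) by the integer matrices g₁ = ![![1,0,0],![3,1,6],![1,0,1]], g₂ = ![![1,3,6],![3,4,12],![-1,-2,-5]], g₃ = ![![0,1,0],![1,0,0],![0,0,1]], each of which satisfies gᵀ·Q₃·g = Q₃ for Q₃ = ![![0,1,0],![1,0,0],![0,0,-6]]. Then h₁² = h₃² = id, h₂³ = id, the composite h₁h₃ has order exactly 6, (h₁h₃)² = h₂, and h₁(h₁h₃)h₁ = (h₁h₃)⁻¹. -/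

import Mathlib

open Matrix

namespace Stmt5

/-- A Gram matrix (up to sign of the rank-one summand) of the lattice `H ⊕ ⟨6⟩`. -/
def Q : Matrix (Fin 3) (Fin 3) ℤ := !![0, 1, 0; 1, 0, 0; 0, 0, -6]

def g1 : Matrix (Fin 3) (Fin 3) ℤ := !![1, 0, 0; 3, 1, 6; 1, 0, 1]

def g2 : Matrix (Fin 3) (Fin 3) ℤ := !![1, 3, 6; 3, 4, 12; -1, -2, -5]

def g3 : Matrix (Fin 3) (Fin 3) ℤ := !![0, 1, 0; 1, 0, 0; 0, 0, 1]

/-- `D = diag(2, 2, 12)`. -/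
def D : Matrix (Fin 3) (Fin 3) ℤ := Matrix.diagonal ![2, 2, 12]

/-- The subgroup `Λ = 2ℤ × 2ℤ × 12ℤ` of `ℤ³`. -/
def Λ : AddSubgroup (Fin 3 → ℤ) :=
  AddSubgroup.pi Set.univ fun i => AddSubgroup.zmultiples (![(2 : ℤ), 2, 12] i)

/-- The finite abelian group `A = ℤ³/Λ`. -/
abbrev A : Type := (Fin 3 → ℤ) ⧸ Λ

def dd : Fin 3 → ℤ := ![2, 2, 12]

lemma mem_Λ (v : Fin 3 → ℤ) : v ∈ Λ ↔ ∀ i, dd i ∣ v i := by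
  simp [Λ, AddSubgroup.mem_pi, Int.mem_zmultiples_iff, dd]

lemma mk_congr {P R : Matrix (Fin 3) (Fin 3) ℤ}
    (h : ∀ i j, dd i ∣ (P - R) i j) (v : Fin 3 → ℤ) :
    (QuotientAddGroup.mk (P.mulVec v) : A) = QuotientAddGroup.mk (R.mulVec v) := by
  rw [QuotientAddGroup.eq]
  rw [mem_Λ]
  intro i
  have : -P.mulVec v + R.mulVec v = (R - P).mulVec v := by
    rw [Matrix.sub_mulVec]; ring_nf
  rw [this]
  simp only [Matrix.mulVec, dotProduct]
  refine Finset.dvd_sum fun j _ => Dvd.dvd.mul_right ?_ _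
  have := h i j
  simp only [Matrix.sub_apply] at this ⊢
  rw [← neg_sub]
  exact dvd_neg.mpr this

def matHom (M : Matrix (Fin 3) (Fin 3) ℤ) (hM : ∀ i j, dd i ∣ M i j * dd j) : A →+ A :=
  QuotientAddGroup.map Λ Λ (M.mulVecLin : (Fin 3 → ℤ) →ₗ[ℤ] (Fin 3 → ℤ)).toAddMonoidHom
    (by
      intro v hv
      simp only [AddSubgroup.mem_comap, LinearMap.toAddMonoidHom_coe, Matrix.mulVecLin_apply]
      rw [mem_Λ] at hv ⊢
      intro i
      simp only [Matrix.mulVec, dotProduct]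
      refine Finset.dvd_sum fun j _ => ?_
      obtain ⟨k, hk⟩ := hv j
      rw [hk, ← mul_assoc]
      exact Dvd.dvd.mul_right (hM i j) k)

lemma matHom_mk (M hM) (v : Fin 3 → ℤ) :
    matHom M hM (QuotientAddGroup.mk v) = QuotientAddGroup.mk (M.mulVec v) := rfl

def matAut (M N : Matrix (Fin 3) (Fin 3) ℤ) (hM : ∀ i j, dd i ∣ M i j * dd j)
    (hN : ∀ i j, dd i ∣ N i j * dd j) (hNM : N * M = 1) (hMN : M * N = 1) : AddAut A where
  toFun := matHom M hM
  invFun := matHom N hN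
  left_inv := by
    intro a
    induction a using QuotientAddGroup.induction_on with
    | H v =>
      rw [matHom_mk, matHom_mk, Matrix.mulVec_mulVec, hNM, Matrix.one_mulVec]
  right_inv := by
    intro a
    induction a using QuotientAddGroup.induction_on with
    | H v =>
      rw [matHom_mk, matHom_mk, Matrix.mulVec_mulVec, hMN, Matrix.one_mulVec]
  map_add' := (matHom M hM).map_add

lemma matAut_mk (M N hM hN hNM hMN) (v : Fin 3 → ℤ) :
    matAut M N hM hN hNM hMN (QuotientAddGroup.mk v) = QuotientAddGroup.mk (M.mulVec v) := rfl


lemma aut_eq_of_congr (e f : AddAut A) (P R : Matrix (Fin 3) (Fin 3) ℤ)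
    (he : ∀ v, e (QuotientAddGroup.mk v) = QuotientAddGroup.mk (P.mulVec v))
    (hf : ∀ v, f (QuotientAddGroup.mk v) = QuotientAddGroup.mk (R.mulVec v))
    (h : ∀ i j, dd i ∣ (P - R) i j) : e = f := by
  refine DFunLike.ext e f fun a => ?_
  induction a using QuotientAddGroup.induction_on with
  | H v => rw [he, hf]; exact mk_congr h v

lemma one_formula (v : Fin 3 → ℤ) :
    (0 : AddAut A) (QuotientAddGroup.mk v) =
      QuotientAddGroup.mk ((1 : Matrix (Fin 3) (Fin 3) ℤ).mulVec v) := by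
  rw [Matrix.one_mulVec]; rfl

lemma aut_formula_mul (e f : AddAut A) (P R : Matrix (Fin 3) (Fin 3) ℤ)
    (he : ∀ v, e (QuotientAddGroup.mk v) = QuotientAddGroup.mk (P.mulVec v))
    (hf : ∀ v, f (QuotientAddGroup.mk v) = QuotientAddGroup.mk (R.mulVec v)) :
    ∀ v, (e + f) (QuotientAddGroup.mk v) = QuotientAddGroup.mk ((P * R).mulVec v) := fun v => by
  rw [AddAut.add_apply, hf, he, Matrix.mulVec_mulVec]

lemma aut_formula_pow (e : AddAut A) (P : Matrix (Fin 3) (Fin 3) ℤ)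
    (he : ∀ v, e (QuotientAddGroup.mk v) = QuotientAddGroup.mk (P.mulVec v)) :
    ∀ (n : ℕ) (v), (n • e) (QuotientAddGroup.mk v) =
      QuotientAddGroup.mk ((P ^ n).mulVec v) := by
  intro n
  induction n with
  | zero => intro v; rw [zero_nsmul, pow_zero]; exact one_formula v
  | succ n ih =>
    intro v
    rw [succ_nsmul, pow_succ]
    exact aut_formula_mul _ _ _ _ ih he v

lemma aut_ne_one (e : AddAut A) (P : Matrix (Fin 3) (Fin 3) ℤ)
    (he : ∀ v, e (QuotientAddGroup.mk v) = QuotientAddGroup.mk (P.mulVec v))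
    (v : Fin 3 → ℤ) (i : Fin 3) (h : ¬ dd i ∣ (P.mulVec v - v) i) : e ≠ 0 := by
  intro h1
  have hv := he v
  rw [h1, AddAut.zero_apply, QuotientAddGroup.eq, mem_Λ] at hv
  exact h (by simpa [neg_add_eq_sub] using hv i)

theorem statement5 :
    (g1ᵀ * Q * g1 = Q ∧ g2ᵀ * Q * g2 = Q ∧ g3ᵀ * Q * g3 = Q) ∧
    Nonempty (A ≃+ ZMod 2 × ZMod 2 × ZMod 12) ∧
    ∃ M1 M2 M3 : Matrix (Fin 3) (Fin 3) ℤ,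
      -- `Mᵢ` is the (integral) matrix `D·gᵢ·D⁻¹`
      M1 * D = D * g1 ∧ M2 * D = D * g2 ∧ M3 * D = D * g3 ∧
      -- the automorphisms `hᵢ` of `A` induced by the `Mᵢ = D·gᵢ·D⁻¹`
      ∃ h1 h2 h3 : AddAut A,
        (∀ v : Fin 3 → ℤ,
            h1 (QuotientAddGroup.mk v) = QuotientAddGroup.mk (M1.mulVec v)) ∧
        (∀ v : Fin 3 → ℤ,
            h2 (QuotientAddGroup.mk v) = QuotientAddGroup.mk (M2.mulVec v)) ∧
        (∀ v : Fin 3 → ℤ,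
            h3 (QuotientAddGroup.mk v) = QuotientAddGroup.mk (M3.mulVec v)) ∧
        -- `h₁² = h₃² = id` and `h₂³ = id`
        2 • h1 = 0 ∧ 2 • h3 = 0 ∧ 3 • h2 = 0 ∧
        -- `h₁h₃` has order exactly 6
        addOrderOf (h1 + h3) = 6 ∧
        -- `(h₁h₃)² = h₂`
        2 • (h1 + h3) = h2 ∧
        -- `h₁(h₁h₃)h₁ = (h₁h₃)⁻¹`
        h1 + (h1 + h3) + h1 = -(h1 + h3) := by
  refine ⟨⟨by decide, by decide, by decide⟩, ?_, ?_⟩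
  · -- the isomorphism A ≃+ ZMod 2 × ZMod 2 × ZMod 12
    let φ : (Fin 3 → ℤ) →+ ZMod 2 × ZMod 2 × ZMod 12 :=
      { toFun := fun v => ((v 0 : ZMod 2), (v 1 : ZMod 2), (v 2 : ZMod 12))
        map_zero' := by simp
        map_add' := by intro v w; simp [Prod.ext_iff] }
    have hsurj : Function.Surjective φ := by
      rintro ⟨a, b, c⟩
      obtain ⟨x, rfl⟩ := ZMod.intCast_surjective a
      obtain ⟨y, rfl⟩ := ZMod.intCast_surjective b
      obtain ⟨z, rfl⟩ := ZMod.intCast_surjective c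
      exact ⟨![x, y, z], rfl⟩
    have hker : Λ = φ.ker := by
      ext v
      rw [mem_Λ, AddMonoidHom.mem_ker]
      simp only [φ, AddMonoidHom.coe_mk, ZeroHom.coe_mk, Prod.mk_eq_zero,
        ZMod.intCast_zmod_eq_zero_iff_dvd]
      constructor
      · intro h
        exact ⟨by exact_mod_cast h 0, by exact_mod_cast h 1, by exact_mod_cast h 2⟩
      · rintro ⟨h0, h1, h2⟩ i
        fin_cases i
        · exact_mod_cast h0
        · exact_mod_cast h1
        · exact_mod_cast h2
    exact ⟨(QuotientAddGroup.quotientAddEquivOfEq hker).trans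
      (QuotientAddGroup.quotientKerEquivOfSurjective φ hsurj)⟩
  · refine ⟨!![1, 0, 0; 3, 1, 1; 6, 0, 1], !![1, 3, 1; 3, 4, 2; -6, -12, -5],
      !![0, 1, 0; 1, 0, 0; 0, 0, 1], by decide, by decide, by decide, ?_⟩
    set M1 : Matrix (Fin 3) (Fin 3) ℤ := !![1, 0, 0; 3, 1, 1; 6, 0, 1] with hM1def
    set M2 : Matrix (Fin 3) (Fin 3) ℤ := !![1, 3, 1; 3, 4, 2; -6, -12, -5] with hM2def
    set M3 : Matrix (Fin 3) (Fin 3) ℤ := !![0, 1, 0; 1, 0, 0; 0, 0, 1] with hM3def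
    set N1 : Matrix (Fin 3) (Fin 3) ℤ := !![1, 0, 0; 3, 1, -1; -6, 0, 1] with hN1def
    set N2 : Matrix (Fin 3) (Fin 3) ℤ := !![4, 3, 2; 3, 1, 1; -12, -6, -5] with hN2def
    set h1 : AddAut A := matAut M1 N1 (by decide) (by decide) (by decide) (by decide) with h1def
    set h2 : AddAut A := matAut M2 N2 (by decide) (by decide) (by decide) (by decide) with h2def
    set h3 : AddAut A := matAut M3 M3 (by decide) (by decide) (by decide) (by decide) with h3def
    have f1 : ∀ v, h1 (QuotientAddGroup.mk v) = QuotientAddGroup.mk (M1.mulVec v) := fun _ => rfl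
    have f2 : ∀ v, h2 (QuotientAddGroup.mk v) = QuotientAddGroup.mk (M2.mulVec v) := fun _ => rfl
    have f3 : ∀ v, h3 (QuotientAddGroup.mk v) = QuotientAddGroup.mk (M3.mulVec v) := fun _ => rfl
    have f13 := aut_formula_mul h1 h3 M1 M3 f1 f3
    have x6 : 6 • (h1 + h3) = 0 :=
      aut_eq_of_congr _ _ ((M1 * M3) ^ 6) 1 (aut_formula_pow _ _ f13 6) one_formula (by intro i j; fin_cases i <;> fin_cases j <;> decide)
    have x2 : 2 • (h1 + h3) ≠ 0 :=
      aut_ne_one _ ((M1 * M3) ^ 2) (aut_formula_pow _ _ f13 2) ![0, 0, 1] 0 (by decide)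
    have x3 : 3 • (h1 + h3) ≠ 0 :=
      aut_ne_one _ ((M1 * M3) ^ 3) (aut_formula_pow _ _ f13 3) ![0, 0, 1] 2 (by decide)
    refine ⟨h1, h2, h3, f1, f2, f3, ?_, ?_, ?_, ?_, ?_, ?_⟩
    · exact aut_eq_of_congr _ _ (M1 ^ 2) 1 (aut_formula_pow _ _ f1 2) one_formula (by intro i j; fin_cases i <;> fin_cases j <;> decide)
    · exact aut_eq_of_congr _ _ (M3 ^ 2) 1 (aut_formula_pow _ _ f3 2) one_formula (by intro i j; fin_cases i <;> fin_cases j <;> decide)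
    · exact aut_eq_of_congr _ _ (M2 ^ 3) 1 (aut_formula_pow _ _ f2 3) one_formula (by intro i j; fin_cases i <;> fin_cases j <;> decide)
    · rw [addOrderOf_eq_iff (by norm_num)]
      refine ⟨x6, fun m hm hm0 hcon => ?_⟩
      interval_cases m
      · exact x2 (by rw [one_nsmul] at hcon; rw [hcon, nsmul_zero])
      · exact x2 hcon
      · exact x3 hcon
      · have : 2 • (h1 + h3) = 0 := by
          have h64 : 6 • (h1 + h3) = 4 • (h1 + h3) + 2 • (h1 + h3) := by rw [← add_nsmul]
          rw [x6, hcon, zero_add] at h64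
          exact h64.symm
        exact x2 this
      · have hx : h1 + h3 = 0 := by
          have h65 : 6 • (h1 + h3) = 5 • (h1 + h3) + (h1 + h3) := succ_nsmul _ 5
          rw [x6, hcon, zero_add] at h65
          exact h65.symm
        exact x2 (by rw [hx, nsmul_zero])
    · exact aut_eq_of_congr _ _ ((M1 * M3) ^ 2) M2 (aut_formula_pow _ _ f13 2) f2 (by intro i j; fin_cases i <;> fin_cases j <;> decide)
    · refine eq_neg_of_add_eq_zero_left ?_
      have fa := aut_formula_mul _ _ _ _ (aut_formula_mul _ _ _ _ f1 f13) f1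
      have fb := aut_formula_mul _ _ _ _ fa f13
      exact aut_eq_of_congr _ _ (M1 * (M1 * M3) * M1 * (M1 * M3)) 1 fb one_formula (by intro i j; fin_cases i <;> fin_cases j <;> decide)


end Stmt5
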